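/- Fix a prime p and let z ∈ ℤ_p be a p-adic integer. Then the limit μ_p(z,1) = lim_{n→∞} 2^{1−n} · #{ a/b ∈ T^(n) : ord_p(a/b − z) ≥ 1 } exists and equals 1/(p+1). -/

import Mathlib

open scoped Classical

/-- Generations of the Calkin–Wilf tree: `cwGen 0 = [1]` is the first
generation (`cwGen (n-1)` is the `n`-th generation `T^{(n)}`, having `2^{n-1}`
elements), and each vertex `a/b` has children `a/(a+b) = q/(q+1)` and
`(a+b)/b = q+1`. -/
def cwGen : ℕ → List ℚ
  | 0 => [1]
  | (n + 1) => (cwGen n).flatMap fun q => [q / (q + 1), q + 1]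

/-!
Reduce a rational `q` modulo `p` to a point of the projective line `ℙ¹(𝔽_p)`, sending the
non-integral ones to `∞`. The two children `q ↦ q + 1` and `q ↦ q / (q + 1)` then act by the
Möbius transformations `T = !![1, 1; 0, 1]` and `L = J T J` with `J = !![0, 1; 1, 0]`, so the
proportions of the residues in generation `n` evolve as the law at time `n` of the random walk on
`ℙ¹(𝔽_p)` that applies `T` or `L` with probability `1/2`. Both are permutations, so the walk
preserves total mass, and any point reaches any other in exactly `2p` steps (passing through `∞`,
which `T` fixes). Comparing the largest and the smallest proportion along such paths shows that
their gap contracts by the factor `1 - 2 / 2 ^ (2p)` every `2p` steps, so the law tends to the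
uniform one on the `p + 1` points. The ball `ord_p (q - z) ≥ 1` is exactly the fibre over the
residue of `z`.
-/

open Filter Topology OnePoint

section RandomWalk

variable {G S ι : Type*} [Group G] [MulAction G S] [Fintype ι]

/-- `u n` is, up to normalisation, the law at time `n` of the random walk `X ↦ g i • X` with `i`
uniform in `ι`. -/
def IsRandomWalkLaw (g : ι → G) (u : ℕ → S → ℝ) : Prop :=
  ∀ n s, u (n + 1) s = (∑ i, u n ((g i)⁻¹ • s)) / Fintype.card ι

namespace IsRandomWalkLaw

variable {g : ι → G} {u : ℕ → S → ℝ}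

lemma neg (hu : IsRandomWalkLaw g u) : IsRandomWalkLaw g (-u) := by
  intro n s
  simp only [Pi.neg_apply, hu n s, Finset.sum_neg_distrib, neg_div]

variable [Nonempty ι]

lemma le_succ_of_forall_le (hu : IsRandomWalkLaw g u) {n : ℕ} {m : ℝ} (hm : ∀ s, m ≤ u n s)
    (s : S) : m ≤ u (n + 1) s := by
  rw [hu, le_div_iff₀ (by positivity)]
  simpa [mul_comm] using Finset.card_nsmul_le_sum Finset.univ _ m fun i _ => hm ((g i)⁻¹ • s)

lemma le_add_of_forall_le (hu : IsRandomWalkLaw g u) {n : ℕ} {m : ℝ} (hm : ∀ s, m ≤ u n s)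
    (k : ℕ) (s : S) : m ≤ u (n + k) s := by
  induction k generalizing s with
  | zero => exact hm s
  | succ k ih => exact hu.le_succ_of_forall_le ih s

lemma succ_le_of_forall_le (hu : IsRandomWalkLaw g u) {n : ℕ} {M : ℝ} (hM : ∀ s, u n s ≤ M)
    (s : S) : u (n + 1) s ≤ M :=
  neg_le_neg_iff.mp (hu.neg.le_succ_of_forall_le (fun s => neg_le_neg (hM s)) s)

lemma add_div_card_le_succ_smul (hu : IsRandomWalkLaw g u) {n : ℕ} {m : ℝ}
    (hm : ∀ s, m ≤ u n s) (i : ι) (s : S) :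
    m + (u n s - m) / Fintype.card ι ≤ u (n + 1) (g i • s) := by
  have hk : (0 : ℝ) < Fintype.card ι := by positivity
  have hrest := Finset.card_nsmul_le_sum (Finset.univ.erase i)
    (fun j => u n ((g j)⁻¹ • g i • s)) m fun j _ => hm _
  rw [nsmul_eq_mul, Finset.card_erase_of_mem (Finset.mem_univ i), Finset.card_univ,
    Nat.cast_sub Fintype.card_pos, Nat.cast_one] at hrest
  rw [hu, ← Finset.add_sum_erase _ _ (Finset.mem_univ i), inv_smul_smul]
  calc m + (u n s - m) / Fintype.card ι = (u n s + (Fintype.card ι - 1) * m) / Fintype.card ι := by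
        field_simp; ring
    _ ≤ _ := by gcongr

lemma add_div_pow_le_list_prod_smul (hu : IsRandomWalkLaw g u) {n : ℕ} {m : ℝ}
    (hm : ∀ s, m ≤ u n s) (w : List ι) (s : S) :
    m + (u n s - m) / Fintype.card ι ^ w.length ≤ u (n + w.length) ((w.map g).prod • s) := by
  induction w with
  | nil => simp
  | cons i w ih =>
    have step := hu.add_div_card_le_succ_smul (hu.le_add_of_forall_le hm w.length) i
      ((w.map g).prod • s)
    rw [List.map_cons, List.prod_cons, mul_smul, List.length_cons, ← add_assoc]
    calc m + (u n s - m) / Fintype.card ι ^ (w.length + 1)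
        = m + (m + (u n s - m) / Fintype.card ι ^ w.length - m) / Fintype.card ι := by
          rw [pow_succ, ← div_div]; ring
      _ ≤ m + (u (n + w.length) ((w.map g).prod • s) - m) / Fintype.card ι := by gcongr
      _ ≤ _ := step

lemma list_prod_smul_le_sub_div_pow (hu : IsRandomWalkLaw g u) {n : ℕ} {M : ℝ}
    (hM : ∀ s, u n s ≤ M) (w : List ι) (s : S) :
    u (n + w.length) ((w.map g).prod • s) ≤ M - (M - u n s) / Fintype.card ι ^ w.length := by
  have := hu.neg.add_div_pow_le_list_prod_smul (m := -M) (fun s => neg_le_neg (hM s)) w s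
  simp only [Pi.neg_apply, neg_sub_neg] at this
  linarith

variable [Fintype S]

lemma sum_succ (hu : IsRandomWalkLaw g u) (n : ℕ) : ∑ s, u (n + 1) s = ∑ s, u n s := by
  have hperm (i : ι) : ∑ s, u n ((g i)⁻¹ • s) = ∑ s, u n s :=
    (MulAction.bijective (g i)⁻¹).sum_comp (u n)
  simp_rw [hu n, ← Finset.sum_div]
  rw [Finset.sum_comm]
  simp_rw [hperm]
  rw [Finset.sum_const, Finset.card_univ, nsmul_eq_mul, mul_div_cancel_left₀ _ (by positivity)]

lemma sum_eq_sum_zero (hu : IsRandomWalkLaw g u) (n : ℕ) : ∑ s, u n s = ∑ s, u 0 s := by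
  induction n with
  | zero => rfl
  | succ n ih => rw [hu.sum_succ, ih]

variable [Nonempty S]

lemma iSup_sub_iInf_add_le (hu : IsRandomWalkLaw g u) {N : ℕ}
    (hreach : ∀ s t : S, ∃ w : List ι, w.length = N ∧ (w.map g).prod • t = s) (n : ℕ) :
    (⨆ s, u (n + N) s) - ⨅ s, u (n + N) s ≤
      (1 - 2 / Fintype.card ι ^ N) * ((⨆ s, u n s) - ⨅ s, u n s) := by
  have hbdd := Finite.bddAbove_range fun s => u n s
  have hbdd' := Finite.bddBelow_range fun s => u n s
  obtain ⟨tMax, htMax⟩ := exists_eq_ciSup_of_finite (f := u n)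
  obtain ⟨tMin, htMin⟩ := exists_eq_ciInf_of_finite (f := u n)
  obtain ⟨sMax, hsMax⟩ := exists_eq_ciSup_of_finite (f := u (n + N))
  obtain ⟨sMin, hsMin⟩ := exists_eq_ciInf_of_finite (f := u (n + N))
  obtain ⟨w, rfl, hw⟩ := hreach sMax tMin
  obtain ⟨w', hw'_length, hw'⟩ := hreach sMin tMax
  have hupper := hu.list_prod_smul_le_sub_div_pow (fun s => le_ciSup hbdd s) w tMin
  have hlower := hu.add_div_pow_le_list_prod_smul (fun s => ciInf_le hbdd' s) w' tMax
  rw [hw, hsMax, htMin] at hupper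
  rw [hw', hw'_length, hsMin, htMax] at hlower
  exact (sub_le_sub hupper hlower).trans_eq (by ring)

lemma tendsto_iSup_sub_iInf (hu : IsRandomWalkLaw g u) {N : ℕ}
    (hreach : ∀ s t : S, ∃ w : List ι, w.length = N ∧ (w.map g).prod • t = s) :
    Tendsto (fun n => (⨆ s, u n s) - ⨅ s, u n s) atTop (𝓝 0) := by
  set d := fun n => (⨆ s, u n s) - ⨅ s, u n s
  have hbdd (n : ℕ) := Finite.bddAbove_range fun s => u n s
  have hbdd' (n : ℕ) := Finite.bddBelow_range fun s => u n s
  have hd_nonneg (n : ℕ) : 0 ≤ d n :=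
    sub_nonneg.mpr ((ciInf_le (hbdd' n) (Classical.arbitrary S)).trans (le_ciSup (hbdd n) _))
  have hd_anti : Antitone d := antitone_nat_of_succ_le fun n =>
    sub_le_sub (ciSup_le (hu.succ_le_of_forall_le (le_ciSup (hbdd n))))
      (le_ciInf (hu.le_succ_of_forall_le (ciInf_le (hbdd' n))))
  have hd := tendsto_atTop_ciInf hd_anti ⟨0, Set.forall_mem_range.mpr hd_nonneg⟩
  have hcontract := le_of_tendsto_of_tendsto' (hd.comp (tendsto_add_atTop_nat N))
    (hd.const_mul _) (hu.iSup_sub_iInf_add_le hreach)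
  have hlimit_nonneg := ge_of_tendsto' hd hd_nonneg
  have hrate : (0 : ℝ) < 2 / Fintype.card ι ^ N := by positivity
  have hlimit : ⨅ n, d n = 0 := by nlinarith
  rwa [hlimit] at hd

theorem tendsto_mean (hu : IsRandomWalkLaw g u) {N : ℕ}
    (hreach : ∀ s t : S, ∃ w : List ι, w.length = N ∧ (w.map g).prod • t = s) (s : S) :
    Tendsto (fun n => u n s) atTop (𝓝 ((∑ t, u 0 t) / Fintype.card S)) := by
  have hbdd (n : ℕ) := Finite.bddAbove_range fun s => u n s
  have hbdd' (n : ℕ) := Finite.bddBelow_range fun s => u n s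
  have hcard : (0 : ℝ) < Fintype.card S := by positivity
  have hmean (n : ℕ) : (⨅ t, u n t) ≤ (∑ t, u 0 t) / Fintype.card S ∧
      (∑ t, u 0 t) / Fintype.card S ≤ ⨆ t, u n t := by
    rw [← hu.sum_eq_sum_zero n, le_div_iff₀ hcard, div_le_iff₀ hcard]
    constructor
    · simpa [mul_comm] using
        Finset.card_nsmul_le_sum Finset.univ _ _ fun t _ => ciInf_le (hbdd' n) t
    · simpa [mul_comm] using
        Finset.sum_le_card_nsmul Finset.univ _ _ fun t _ => le_ciSup (hbdd n) t
  rw [tendsto_iff_norm_sub_tendsto_zero]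
  refine squeeze_zero (fun n => norm_nonneg _) (fun n => ?_) (hu.tendsto_iSup_sub_iInf hreach)
  rw [Real.norm_eq_abs, abs_sub_le_iff]
  have := ciInf_le (hbdd' n) s
  have := le_ciSup (hbdd n) s
  constructor <;> linarith [hmean n]

end IsRandomWalkLaw

end RandomWalk

section Moebius

variable (K : Type*) [Field K] [DecidableEq K]

def shiftGL : GL (Fin 2) K :=
  .mkOfDetNeZero !![1, 1; 0, 1] (by simp)

def inversionGL : GL (Fin 2) K :=
  .mkOfDetNeZero !![0, 1; 1, 0] (by simp)

variable {K}

@[simp] lemma shiftGL_smul_coe (k : K) : shiftGL K • (k : OnePoint K) = ↑(k + 1) := by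
  simp [shiftGL, smul_some_eq_ite]

@[simp] lemma shiftGL_smul_infty : shiftGL K • (∞ : OnePoint K) = ∞ := by
  simp [shiftGL, smul_infty_eq_ite]

lemma shiftGL_pow_smul_coe (n : ℕ) (k : K) : shiftGL K ^ n • (k : OnePoint K) = ↑(k + n) := by
  induction n with
  | zero => simp
  | succ n ih => rw [pow_succ', mul_smul, ih, shiftGL_smul_coe, Nat.cast_succ, add_assoc]

@[simp] lemma shiftGL_pow_smul_infty (n : ℕ) : shiftGL K ^ n • (∞ : OnePoint K) = ∞ := by
  induction n with
  | zero => simp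
  | succ n ih => rw [pow_succ', mul_smul, ih, shiftGL_smul_infty]

lemma inversionGL_smul_coe (k : K) :
    inversionGL K • (k : OnePoint K) = if k = 0 then ∞ else ↑k⁻¹ := by
  simp [inversionGL, smul_some_eq_ite]

@[simp] lemma inversionGL_smul_infty : inversionGL K • (∞ : OnePoint K) = (0 : K) := by
  simp [inversionGL, smul_infty_eq_ite]

end Moebius

lemma PadicInt.toZMod_eq_zero_iff {p : ℕ} [Fact p.Prime] {x : ℤ_[p]} :
    PadicInt.toZMod x = 0 ↔ ‖x‖ < 1 := by
  rw [← RingHom.mem_ker, PadicInt.ker_toZMod, IsLocalRing.mem_maximalIdeal, PadicInt.mem_nonunits]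

namespace Padic

variable {p : ℕ} [Fact p.Prime]

lemma norm_le_inv_iff_lt_one (x : ℚ_[p]) : ‖x‖ ≤ (p : ℝ)⁻¹ ↔ ‖x‖ < 1 := by
  simpa using norm_le_pow_iff_norm_lt_pow_add_one x (-1)

lemma exists_coe_of_norm_le_one {x : ℚ_[p]} (h : ‖x‖ ≤ 1) : ∃ z : ℤ_[p], (z : ℚ_[p]) = x :=
  ⟨⟨x, h⟩, rfl⟩

noncomputable def residue (x : ℚ_[p]) : OnePoint (ZMod p) :=
  if h : ‖x‖ ≤ 1 then ↑(PadicInt.toZMod (⟨x, h⟩ : ℤ_[p])) else ∞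

@[simp] lemma residue_coe (z : ℤ_[p]) : residue (z : ℚ_[p]) = ↑(PadicInt.toZMod z) :=
  dif_pos z.2

lemma residue_of_one_lt_norm {x : ℚ_[p]} (h : 1 < ‖x‖) : residue x = ∞ :=
  dif_neg h.not_ge

lemma residue_eq_coe_iff (x : ℚ_[p]) (z : ℤ_[p]) :
    residue x = ↑(PadicInt.toZMod z) ↔ ‖x - z‖ < 1 := by
  rcases le_or_gt ‖x‖ 1 with h | h
  · obtain ⟨y, rfl⟩ := exists_coe_of_norm_le_one h
    rw [residue_coe, coe_eq_coe, ← sub_eq_zero, ← map_sub, PadicInt.toZMod_eq_zero_iff,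
      PadicInt.norm_def, PadicInt.coe_sub]
  · have hz : ‖(z : ℚ_[p])‖ < ‖x‖ := h.trans_le' z.2
    rw [residue_of_one_lt_norm h, sub_eq_add_neg,
      IsUltrametricDist.norm_add_eq_max_of_norm_ne_norm (by rw [norm_neg]; exact hz.ne'),
      norm_neg, max_eq_left hz.le]
    simp [h.not_gt]

lemma residue_add_one (x : ℚ_[p]) : residue (x + 1) = shiftGL (ZMod p) • residue x := by
  rcases le_or_gt ‖x‖ 1 with h | h
  · obtain ⟨z, rfl⟩ := exists_coe_of_norm_le_one h
    rw [← PadicInt.coe_one, ← PadicInt.coe_add, residue_coe, residue_coe, shiftGL_smul_coe,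
      map_add, map_one]
  · have h₁ : 1 < ‖x + 1‖ := by
      rwa [IsUltrametricDist.norm_add_eq_max_of_norm_ne_norm (by simpa using h.ne'), norm_one,
        max_eq_left h.le]
    rw [residue_of_one_lt_norm h, residue_of_one_lt_norm h₁, shiftGL_smul_infty]

lemma residue_inv {x : ℚ_[p]} (hx : x ≠ 0) :
    residue x⁻¹ = inversionGL (ZMod p) • residue x := by
  rcases lt_trichotomy ‖x‖ 1 with h | h | h
  · obtain ⟨z, rfl⟩ := exists_coe_of_norm_le_one h.le
    have h₁ : 1 < ‖(z : ℚ_[p])⁻¹‖ := by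
      rw [norm_inv]
      exact one_lt_inv_iff₀.mpr ⟨norm_pos_iff.mpr hx, h⟩
    rw [residue_of_one_lt_norm h₁, residue_coe, inversionGL_smul_coe,
      if_pos (PadicInt.toZMod_eq_zero_iff.mpr h)]
  · let u := PadicInt.mkUnits h
    have hu : ((u : ℤ_[p]) : ℚ_[p]) = x := rfl
    have hu_inv : ((↑u⁻¹ : ℤ_[p]) : ℚ_[p]) = x⁻¹ :=
      eq_inv_of_mul_eq_one_right (by rw [← hu, ← PadicInt.coe_mul, u.mul_inv, PadicInt.coe_one])
    rw [← hu_inv, ← hu, residue_coe, residue_coe, inversionGL_smul_coe,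
      if_neg (u.isUnit.map PadicInt.toZMod).ne_zero, map_units_inv]
  · have h₁ : ‖x⁻¹‖ < 1 := by
      rw [norm_inv]
      exact inv_lt_one_of_one_lt₀ h
    obtain ⟨z, hz⟩ := exists_coe_of_norm_le_one h₁.le
    rw [residue_of_one_lt_norm h, ← hz, residue_coe, inversionGL_smul_infty, coe_eq_coe,
      PadicInt.toZMod_eq_zero_iff, PadicInt.norm_def, hz]
    exact h₁

lemma residue_div_add_one {x : ℚ_[p]} (hx : x ≠ 0) (hx₁ : x + 1 ≠ 0) :
    residue (x / (x + 1)) =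
      (inversionGL (ZMod p) * shiftGL (ZMod p) * inversionGL (ZMod p)) • residue x := by
  have hrw : x⁻¹ + 1 = (x + 1) / x := by field_simp; ring
  rw [← inv_div, ← hrw, residue_inv (hrw ▸ div_ne_zero hx₁ hx), residue_add_one,
    residue_inv hx, mul_smul, mul_smul]

end Padic

lemma List.countP_flatMap_pair {α β : Type*} (l : List α) (f g : α → β) (P : β → Bool) :
    (l.flatMap fun a => [f a, g a]).countP P =
      l.countP (fun a => P (f a)) + l.countP (fun a => P (g a)) := by
  induction l with
  | nil => simp
  | cons a l ih =>
    simp only [List.flatMap_cons, List.countP_append, ih, List.countP_cons, List.countP_nil]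
    omega

lemma pos_of_mem_cwGen : ∀ {n : ℕ} {q : ℚ}, q ∈ cwGen n → 0 < q
  | 0, q, hq => by simp_all [cwGen]
  | n + 1, q, hq => by
    obtain ⟨a, ha, hq⟩ := List.mem_flatMap.mp hq
    have := pos_of_mem_cwGen ha
    rcases List.mem_pair.mp hq with rfl | rfl <;> positivity

/-- `false` is the left child `q ↦ q / (q + 1) = (q⁻¹ + 1)⁻¹`, `true` the right child `q ↦ q + 1`.
-/
def cwChildGL (K : Type*) [Field K] [DecidableEq K] : Bool → GL (Fin 2) K
  | false => inversionGL K * shiftGL K * inversionGL K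
  | true => shiftGL K

section CalkinWilf

variable (p : ℕ) [Fact p.Prime]

noncomputable def cwResidueFreq (n : ℕ) (s : OnePoint (ZMod p)) : ℝ :=
  (cwGen n).countP (fun q : ℚ => Padic.residue (q : ℚ_[p]) = s) / 2 ^ n

lemma isRandomWalkLaw_cwResidueFreq :
    IsRandomWalkLaw (cwChildGL (ZMod p)) (cwResidueFreq p) := by
  intro n s
  have hcount (b : Bool) (child : ℚ → ℚ) (hchild : ∀ q ∈ cwGen n,
      Padic.residue (child q : ℚ_[p]) = cwChildGL (ZMod p) b • Padic.residue (q : ℚ_[p])) :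
      (cwGen n).countP (fun q : ℚ => Padic.residue (child q : ℚ_[p]) = s) =
        (cwGen n).countP
          (fun q : ℚ => Padic.residue (q : ℚ_[p]) = (cwChildGL (ZMod p) b)⁻¹ • s) :=
    List.countP_congr fun q hq => by simp [hchild q hq, smul_eq_iff_eq_inv_smul]
  rw [cwResidueFreq, cwGen, List.countP_flatMap_pair, Fintype.sum_bool, Fintype.card_bool,
    hcount false (fun q => q / (q + 1)) ?left, hcount true (fun q => q + 1) ?right]
  · simp only [cwResidueFreq, pow_succ]
    push_cast
    ring
  case left =>
    intro q hq
    have hq₀ := pos_of_mem_cwGen hq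
    push_cast
    exact Padic.residue_div_add_one (by exact_mod_cast hq₀.ne')
      (by exact_mod_cast (by positivity : q + 1 ≠ 0))
  case right =>
    intro q _
    push_cast
    exact Padic.residue_add_one _

lemma list_prod_replicate_true_cwChildGL (k : ℕ) :
    ((List.replicate k true).map (cwChildGL (ZMod p))).prod = shiftGL (ZMod p) ^ k := by
  simp [List.map_replicate, cwChildGL]

lemma exists_cwChildGL_word_smul_eq_infty (t : OnePoint (ZMod p)) :
    ∃ w : List Bool, w.length ≤ p ∧ (w.map (cwChildGL (ZMod p))).prod • t = ∞ := by
  induction t using OnePoint.rec with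
  | infty => exact ⟨[], by simp⟩
  | coe x =>
    refine ⟨false :: List.replicate (-1 - x).val true, by simpa using ZMod.val_lt (-1 - x), ?_⟩
    rw [List.map_cons, List.prod_cons, mul_smul, list_prod_replicate_true_cwChildGL,
      shiftGL_pow_smul_coe, ZMod.natCast_zmod_val, add_sub_cancel]
    simp [cwChildGL, mul_smul, inversionGL_smul_coe]

lemma exists_cwChildGL_word_infty_smul_eq (s : OnePoint (ZMod p)) :
    ∃ w : List Bool, w.length ≤ p ∧ (w.map (cwChildGL (ZMod p))).prod • ∞ = s := by
  induction s using OnePoint.rec with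
  | infty => exact ⟨[], by simp⟩
  | coe y =>
    refine ⟨List.replicate (y - 1).val true ++ [false], by simpa using ZMod.val_lt (y - 1), ?_⟩
    rw [List.map_append, List.prod_append, mul_smul, list_prod_replicate_true_cwChildGL]
    simp [cwChildGL, mul_smul, inversionGL_smul_coe, shiftGL_pow_smul_coe]

lemma exists_cwChildGL_word_smul_eq (s t : OnePoint (ZMod p)) :
    ∃ w : List Bool, w.length = 2 * p ∧ (w.map (cwChildGL (ZMod p))).prod • t = s := by
  obtain ⟨w₁, hw₁, ht⟩ := exists_cwChildGL_word_smul_eq_infty p t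
  obtain ⟨w₂, hw₂, hs⟩ := exists_cwChildGL_word_infty_smul_eq p s
  refine ⟨w₂ ++ List.replicate (2 * p - w₁.length - w₂.length) true ++ w₁, by simp; omega, ?_⟩
  simp only [List.map_append, List.prod_append, mul_smul, ht, list_prod_replicate_true_cwChildGL,
    shiftGL_pow_smul_infty, hs]

end CalkinWilf

/-- For a `p`-adic integer `z`, the limiting proportion of fractions `a/b` in
the `n`-th generation of the Calkin–Wilf tree with `ord_p(a/b − z) ≥ 1`
(equivalently `‖a/b − z‖_p ≤ 1/p`) equals `1/(p+1)`. -/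
theorem cw_padic_ball_one (p : ℕ) [hp : Fact p.Prime] (z : ℤ_[p]) :
    Filter.Tendsto
      (fun n : ℕ =>
        (((cwGen (n - 1)).countP fun q =>
          decide (‖(q : ℚ_[p]) - (z : ℚ_[p])‖ ≤ ((p : ℝ))⁻¹)) : ℝ) / 2 ^ (n - 1))
      Filter.atTop (nhds (1 / ((p : ℝ) + 1))) := by
  have hinit : ∑ s, cwResidueFreq p 0 s = 1 := by simp [cwResidueFreq, cwGen]
  have hcard : Fintype.card (OnePoint (ZMod p)) = p + 1 :=
    Fintype.card_option.trans (congrArg (· + 1) (ZMod.card p))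
  have hlim := (isRandomWalkLaw_cwResidueFreq p).tendsto_mean (exists_cwChildGL_word_smul_eq p)
    ↑(PadicInt.toZMod z)
  rw [hinit, hcard, Nat.cast_succ] at hlim
  refine (hlim.comp (tendsto_sub_atTop_nat 1)).congr fun n => ?_
  -- the statement's `(q : ℚ_[p])` coerces the whole list `cwGen (n - 1)` into `List ℚ_[p]`
  simp only [Function.comp_apply, cwResidueFreq, List.bind_eq_flatMap, List.pure_def,
    ← List.map_eq_flatMap, List.countP_map]
  congr 2
  exact List.countP_congr fun q _ => by
    simp [Padic.norm_le_inv_iff_lt_one, Padic.residue_eq_coe_iff]
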